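/- arXiv:2003.09023 — 7 statements merged into one kernel-verified Lean document; each statement's English description precedes it below -/
import Mathlib

section
/- For a ∈ (-∞, 1), the function ψ(t) = t(1+t²)^{-a/2} / ∫₀ᵗ (1+s²)^{-a/2} ds defined for t > 0 satisfies inf_{t>0} ψ(t) = min{1, 1-a} and sup_{t>0} ψ(t) = max{1, 1-a}. -/
/-!
With `f s = (1 + s²)^(-a/2)` and `r s = 1 - a + a / (1 + s²)`, the numerator `t f t` has derivative
`r t * f t`, so `ψ t = ∫₀ᵗ r f / ∫₀ᵗ f` is a mean of `r` with positive weight `f`. Since `r` takes its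
values between `r 0 = 1` and its limit `1 - a` at infinity, so does `ψ`. Both values are approached:
as `t → 0⁺` by L'Hôpital's rule, and as `t → ∞` because for `a ≤ 1` the weight is not integrable
(`∫₀ᵗ f ≥ arsinh t`), so the mean forgets any bounded initial segment.
-/

open MeasureTheory Filter Topology Set Asymptotics

theorem integral_mul_div_integral_mem_Icc {f r : ℝ → ℝ} {a b c d : ℝ} (hab : a ≤ b)
    (hf : IntervalIntegrable f volume a b)
    (hrf : IntervalIntegrable (fun s => r s * f s) volume a b)
    (hf₀ : ∀ s ∈ Icc a b, 0 ≤ f s) (hr : ∀ s ∈ Icc a b, r s ∈ Icc c d)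
    (hF : 0 < ∫ s in a..b, f s) :
    (∫ s in a..b, r s * f s) / (∫ s in a..b, f s) ∈ Icc c d := by
  rw [mem_Icc, le_div_iff₀ hF, div_le_iff₀ hF, ← intervalIntegral.integral_const_mul,
    ← intervalIntegral.integral_const_mul]
  exact ⟨intervalIntegral.integral_mono_on hab (hf.const_mul c) hrf fun s hs =>
      mul_le_mul_of_nonneg_right (hr s hs).1 (hf₀ s hs),
    intervalIntegral.integral_mono_on hab hrf (hf.const_mul d) fun s hs =>
      mul_le_mul_of_nonneg_right (hr s hs).2 (hf₀ s hs)⟩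

theorem tendsto_integral_mul_div_integral_nhdsGT {f r : ℝ → ℝ} {a : ℝ} (hf : Continuous f)
    (hr : Continuous r) (hfa : f a ≠ 0) :
    Tendsto (fun t => (∫ s in a..t, r s * f s) / ∫ s in a..t, f s) (𝓝[>] a) (𝓝 (r a)) := by
  have hf_ne : ∀ᶠ t in 𝓝[>] a, f t ≠ 0 :=
    (hf.continuousAt.eventually_ne hfa).filter_mono nhdsWithin_le_nhds
  have tendsto_integral_zero {h : ℝ → ℝ} (hh : Continuous h) :
      Tendsto (fun t => ∫ s in a..t, h s) (𝓝[>] a) (𝓝 0) := by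
    have := ((hh.integral_hasStrictDerivAt a a).hasDerivAt.continuousAt.tendsto).mono_left
      (nhdsWithin_le_nhds (s := Ioi a))
    simpa using this
  refine HasDerivAt.lhopital_zero_nhdsGT
    (Eventually.of_forall fun t => ((hr.mul hf).integral_hasStrictDerivAt a t).hasDerivAt)
    (Eventually.of_forall fun t => (hf.integral_hasStrictDerivAt a t).hasDerivAt) hf_ne
    (tendsto_integral_zero (hr.mul hf)) (tendsto_integral_zero hf) ?_
  refine (hr.continuousAt.tendsto.mono_left nhdsWithin_le_nhds).congr' ?_
  filter_upwards [hf_ne] with t ht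
  exact (mul_div_cancel_right₀ (r t) ht).symm

theorem isLittleO_intervalIntegral_atTop {u v : ℝ → ℝ} {a : ℝ}
    (hu : ∀ t, IntervalIntegrable u volume a t) (hv : ∀ t, IntervalIntegrable v volume a t)
    (hv₀ : ∀ s, 0 ≤ v s) (huv : u =o[atTop] v)
    (hV : Tendsto (fun t => ∫ s in a..t, v s) atTop atTop) :
    (fun t => ∫ s in a..t, u s) =o[atTop] fun t => ∫ s in a..t, v s := by
  refine IsLittleO.of_bound fun ε hε => ?_
  obtain ⟨T, hT⟩ := eventually_atTop.1 ((huv.bound (half_pos hε)).and (eventually_ge_atTop a))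
  have haT : a ≤ T := (hT T le_rfl).2
  filter_upwards [eventually_ge_atTop T,
    hV.eventually_ge_atTop (2 * ‖∫ s in a..T, u s‖ / ε)] with t hTt ht
  have hint (w : ℝ → ℝ) (hw : ∀ t, IntervalIntegrable w volume a t) :
      IntervalIntegrable w volume T t :=
    (hw T).symm.trans (hw t)
  have head : ‖∫ s in a..T, u s‖ ≤ ε / 2 * ∫ s in a..t, v s := by
    rw [div_le_iff₀ hε] at ht
    linarith
  have tail : ‖∫ s in T..t, u s‖ ≤ ε / 2 * ∫ s in T..t, v s := by
    rw [← intervalIntegral.integral_const_mul]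
    refine intervalIntegral.norm_integral_le_of_norm_le hTt (ae_of_all _ fun s hs => ?_)
      ((hint v hv).const_mul _)
    simpa [Real.norm_of_nonneg (hv₀ s)] using (hT s hs.1.le).1
  have head_v : 0 ≤ ∫ s in a..T, v s := intervalIntegral.integral_nonneg haT fun s _ => hv₀ s
  rw [← intervalIntegral.integral_add_adjacent_intervals (hu T) (hint u hu),
    Real.norm_of_nonneg (intervalIntegral.integral_nonneg (haT.trans hTt) fun s _ => hv₀ s)]
  rw [← intervalIntegral.integral_add_adjacent_intervals (hv T) (hint v hv)] at head ⊢
  calc ‖(∫ s in a..T, u s) + ∫ s in T..t, u s‖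
      ≤ ‖∫ s in a..T, u s‖ + ‖∫ s in T..t, u s‖ := norm_add_le _ _
    _ ≤ ε * ((∫ s in a..T, v s) + ∫ s in T..t, v s) := by linarith [mul_nonneg hε.le head_v]

theorem tendsto_integral_mul_div_integral_atTop {f r : ℝ → ℝ} {a L : ℝ}
    (hf : ∀ t, IntervalIntegrable f volume a t)
    (hrf : ∀ t, IntervalIntegrable (fun s => r s * f s) volume a t)
    (hf₀ : ∀ s, 0 ≤ f s) (hF : Tendsto (fun t => ∫ s in a..t, f s) atTop atTop)
    (hr : Tendsto r atTop (𝓝 L)) :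
    Tendsto (fun t => (∫ s in a..t, r s * f s) / ∫ s in a..t, f s) atTop (𝓝 L) := by
  have hu (t : ℝ) : IntervalIntegrable (fun s => (r s - L) * f s) volume a t := by
    simpa only [sub_mul] using (hrf t).sub ((hf t).const_mul L)
  have hsmall : (fun s => (r s - L) * f s) =o[atTop] f := by
    simpa using ((isLittleO_one_iff ℝ).2 (tendsto_sub_nhds_zero_iff.2 hr)).mul_isBigO
      (isBigO_refl f atTop)
  rw [← tendsto_sub_nhds_zero_iff]
  refine (isLittleO_intervalIntegral_atTop hu hf hf₀ hsmall hF).tendsto_div_nhds_zero.congr' ?_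
  filter_upwards [hF.eventually_gt_atTop 0] with t ht
  simp only [sub_mul]
  rw [intervalIntegral.integral_sub (hrf t) ((hf t).const_mul L),
    intervalIntegral.integral_const_mul, sub_div, mul_div_cancel_right₀ L ht.ne']

theorem isGLB_min_and_isLUB_max_of_mem_closure {α : Type*} [TopologicalSpace α] [LinearOrder α]
    [OrderTopology α] {S : Set α} {x y : α} (hS : S ⊆ Icc (min x y) (max x y))
    (hx : x ∈ closure S) (hy : y ∈ closure S) : IsGLB S (min x y) ∧ IsLUB S (max x y) :=
  ⟨isGLB_of_mem_closure (fun _ h => (hS h).1) (by rcases min_choice x y with h | h <;> rwa [h]),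
    isLUB_of_mem_closure (fun _ h => (hS h).2) (by rcases max_choice x y with h | h <;> rwa [h])⟩

theorem continuous_one_add_sq_rpow (p : ℝ) : Continuous fun s : ℝ => (1 + s ^ 2) ^ p :=
  (by fun_prop : Continuous fun s : ℝ => 1 + s ^ 2).rpow_const fun _ => Or.inl (by positivity)

theorem continuous_one_sub_add_mul_inv_one_add_sq (a : ℝ) :
    Continuous fun s : ℝ => 1 - a + a * (1 + s ^ 2)⁻¹ := by
  fun_prop (disch := exact fun _ => by positivity)

theorem hasDerivAt_mul_one_add_sq_rpow (a t : ℝ) :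
    HasDerivAt (fun t => t * (1 + t ^ 2) ^ (-a / 2))
      ((1 - a + a * (1 + t ^ 2)⁻¹) * (1 + t ^ 2) ^ (-a / 2)) t := by
  have hpos : 0 < 1 + t ^ 2 := by positivity
  refine ((hasDerivAt_id' t).fun_mul
    (((hasDerivAt_pow 2 t).const_add 1).rpow_const (p := -a / 2) (Or.inl hpos.ne'))).congr_deriv ?_
  rw [Real.rpow_sub_one hpos.ne']
  field_simp
  ring

theorem mul_one_add_sq_rpow_eq_integral (a t : ℝ) :
    t * (1 + t ^ 2) ^ (-a / 2) =
      ∫ s in (0:ℝ)..t, (1 - a + a * (1 + s ^ 2)⁻¹) * (1 + s ^ 2) ^ (-a / 2) := by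
  rw [intervalIntegral.integral_eq_sub_of_hasDerivAt (fun s _ => hasDerivAt_mul_one_add_sq_rpow a s)]
  · simp
  · exact ((continuous_one_sub_add_mul_inv_one_add_sq a).mul
      (continuous_one_add_sq_rpow _)).intervalIntegrable _ _

theorem one_sub_add_mul_inv_one_add_sq_mem_Icc (a s : ℝ) :
    1 - a + a * (1 + s ^ 2)⁻¹ ∈ Icc (min 1 (1 - a)) (max 1 (1 - a)) := by
  have hw₀ : 0 < (1 + s ^ 2)⁻¹ := by positivity
  have hw₁ : (1 + s ^ 2)⁻¹ ≤ 1 := inv_le_one_of_one_le₀ (by nlinarith [sq_nonneg s])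
  rcases le_total 0 a with ha | ha
  · rw [min_eq_right (by linarith), max_eq_left (by linarith)]
    constructor <;> nlinarith
  · rw [min_eq_left (by linarith), max_eq_right (by linarith)]
    constructor <;> nlinarith

theorem tendsto_integral_one_add_sq_rpow_atTop {a : ℝ} (ha : a ≤ 1) :
    Tendsto (fun t => ∫ s in (0:ℝ)..t, (1 + s ^ 2) ^ (-a / 2)) atTop atTop := by
  refine tendsto_atTop_mono' atTop ?_ (Real.arsinh_strictMono.monotone.tendsto_atTop_atTop
    fun b => ⟨Real.sinh b, (Real.arsinh_sinh b).ge⟩)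
  filter_upwards [eventually_ge_atTop 0] with t ht
  have hcont : Continuous fun s : ℝ => (√(1 + s ^ 2))⁻¹ :=
    (by fun_prop : Continuous fun s : ℝ => √(1 + s ^ 2)).inv₀ fun s =>
      (Real.sqrt_pos.2 (by positivity)).ne'
  calc Real.arsinh t = ∫ s in (0:ℝ)..t, (√(1 + s ^ 2))⁻¹ := by
        rw [intervalIntegral.integral_eq_sub_of_hasDerivAt (fun s _ => Real.hasDerivAt_arsinh s)
          (hcont.intervalIntegrable _ _), Real.arsinh_zero, sub_zero]
    _ ≤ ∫ s in (0:ℝ)..t, (1 + s ^ 2) ^ (-a / 2) :=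
        intervalIntegral.integral_mono_on ht (hcont.intervalIntegrable _ _)
          ((continuous_one_add_sq_rpow _).intervalIntegrable _ _) fun s _ => ?_
  rw [Real.sqrt_eq_rpow, ← Real.rpow_neg (by positivity)]
  exact Real.rpow_le_rpow_of_exponent_le (le_add_of_nonneg_right (sq_nonneg s)) (by linarith)

theorem stmt_0 (a : ℝ) (ha : a < 1) :
    IsGLB ((fun t : ℝ => t * (1 + t ^ 2) ^ (-a / 2) / ∫ s in (0:ℝ)..t, (1 + s ^ 2) ^ (-a / 2)) '' Set.Ioi 0) (min 1 (1 - a)) ∧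
    IsLUB ((fun t : ℝ => t * (1 + t ^ 2) ^ (-a / 2) / ∫ s in (0:ℝ)..t, (1 + s ^ 2) ^ (-a / 2)) '' Set.Ioi 0) (max 1 (1 - a)) := by
  set r : ℝ → ℝ := fun s => 1 - a + a * (1 + s ^ 2)⁻¹
  set f : ℝ → ℝ := fun s => (1 + s ^ 2) ^ (-a / 2)
  have hψ : (fun t : ℝ => t * (1 + t ^ 2) ^ (-a / 2) / ∫ s in (0:ℝ)..t, (1 + s ^ 2) ^ (-a / 2)) =
      fun t => (∫ s in (0:ℝ)..t, r s * f s) / ∫ s in (0:ℝ)..t, f s := by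
    funext t
    rw [mul_one_add_sq_rpow_eq_integral]
  have hr : Continuous r := continuous_one_sub_add_mul_inv_one_add_sq a
  have hf : Continuous f := continuous_one_add_sq_rpow _
  have hf₀ (s : ℝ) : 0 < f s := by positivity
  rw [hψ]
  refine isGLB_min_and_isLUB_max_of_mem_closure ?_ ?_ ?_
  · rintro _ ⟨t, ht, rfl⟩
    exact integral_mul_div_integral_mem_Icc ht.le (hf.intervalIntegrable _ _)
      ((hr.mul hf).intervalIntegrable _ _) (fun s _ => (hf₀ s).le)
      (fun s _ => one_sub_add_mul_inv_one_add_sq_mem_Icc a s)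
      (intervalIntegral.intervalIntegral_pos_of_pos (hf.intervalIntegrable _ _) hf₀ ht)
  · have h := tendsto_integral_mul_div_integral_nhdsGT hf hr (hf₀ 0).ne'
    rw [show r 0 = 1 by simp [r]] at h
    exact mem_closure_of_tendsto h (eventually_mem_nhdsWithin.mono fun t ht => mem_image_of_mem _ ht)
  · have hr_top : Tendsto r atTop (𝓝 (1 - a)) := by
      have h : Tendsto (fun s : ℝ => (1 + s ^ 2)⁻¹) atTop (𝓝 0) := tendsto_inv_atTop_zero.comp
        (tendsto_atTop_add_const_left _ 1 (tendsto_pow_atTop two_ne_zero))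
      simpa using (h.const_mul a).const_add (1 - a)
    exact mem_closure_of_tendsto (tendsto_integral_mul_div_integral_atTop
        (fun _ => hf.intervalIntegrable _ _) (fun _ => (hr.mul hf).intervalIntegrable _ _)
        (fun s => (hf₀ s).le) (tendsto_integral_one_add_sq_rpow_atTop ha.le) hr_top)
      ((eventually_gt_atTop 0).mono fun t ht => mem_image_of_mem _ ht)
end

section
/- For a ∈ (-3, 1), the value g_a(1) = 2^{1-a/2} + a∫₀¹(1+s²)^{-a/2} ds is strictly positive. -/
open MeasureTheory

/-!
On `[0, 1]` we have `1 + s² ≤ 1 + s`, and `t ↦ a * t ^ (-a / 2)` is antitone on `(0, ∞)` whatever the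
sign of `a`. Hence `a * ∫₀¹ (1 + s²) ^ (-a / 2)` is at least `a * ∫₀¹ (1 + s) ^ (-a / 2)`, which is
explicit. With `B = 2 ^ (1 - a / 2)` the resulting lower bound is `(B (1 + a / 2) - a) / (1 - a / 2)`,
positive for `-3 < a < 2` since `1 ≤ B` when `a ≤ 2` and `B < 2 ^ (5 / 2) < 6` when `-3 < a`.
-/

theorem mul_rpow_neg_half_le_of_le {x y : ℝ} (hx : 0 < x) (hxy : x ≤ y) (a : ℝ) :
    a * y ^ (-a / 2) ≤ a * x ^ (-a / 2) := by
  rcases le_total 0 a with ha | ha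
  · exact mul_le_mul_of_nonneg_left (Real.rpow_le_rpow_of_nonpos hx hxy (by linarith)) ha
  · exact mul_le_mul_of_nonpos_left (Real.rpow_le_rpow hx.le hxy (by linarith)) ha

theorem integral_one_add_rpow {p : ℝ} (hp : p ≠ -1) :
    ∫ s in (0:ℝ)..1, (1 + s) ^ p = (2 ^ (p + 1) - 1) / (p + 1) := by
  rw [intervalIntegral.integral_comp_add_left (fun s => s ^ p) 1,
    integral_rpow (Or.inr ⟨hp, by norm_num⟩)]
  norm_num

theorem le_mul_integral_one_add_sq_rpow_neg_half {a : ℝ} (ha : a ≠ 2) :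
    a * ((2 ^ (1 - a / 2) - 1) / (1 - a / 2)) ≤ a * ∫ s in (0:ℝ)..1, (1 + s ^ 2) ^ (-a / 2) := by
  have hexp : 1 - a / 2 = -a / 2 + 1 := by ring
  rw [hexp, ← integral_one_add_rpow (by contrapose! ha; linarith),
    ← intervalIntegral.integral_const_mul, ← intervalIntegral.integral_const_mul]
  refine intervalIntegral.integral_mono_on zero_le_one ?_ ?_ fun s hs => ?_
  · refine ContinuousOn.intervalIntegrable ?_
    exact continuousOn_const.mul
      (ContinuousOn.rpow_const (by fun_prop) fun s hs => Or.inl (by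
        rw [Set.uIcc_of_le zero_le_one] at hs; linarith [hs.1]))
  · exact (continuous_const.mul
      (Continuous.rpow_const (by fun_prop) fun s => Or.inl (by positivity))).intervalIntegrable _ _
  · exact mul_rpow_neg_half_le_of_le (by positivity) (by nlinarith [hs.1, hs.2]) a

theorem two_rpow_lt_six {x : ℝ} (hx : x ≤ 5 / 2) : (2 : ℝ) ^ x < 6 := by
  have hsq : ((2 : ℝ) ^ ((5 : ℝ) / 2)) ^ 2 = 32 := by
    rw [← Real.rpow_two, ← Real.rpow_mul zero_le_two]
    norm_num
  have hle : (2 : ℝ) ^ x ≤ 2 ^ ((5 : ℝ) / 2) := Real.rpow_le_rpow_of_exponent_le one_le_two hx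
  nlinarith [Real.rpow_nonneg zero_le_two ((5 : ℝ) / 2)]

theorem two_rpow_add_mul_div_pos {a : ℝ} (h1 : -3 < a) (h2 : a < 2) :
    0 < (2 : ℝ) ^ (1 - a / 2) + a * ((2 ^ (1 - a / 2) - 1) / (1 - a / 2)) := by
  set B : ℝ := 2 ^ (1 - a / 2)
  have hB1 : 1 ≤ B := Real.one_le_rpow one_le_two (by linarith)
  have hB6 : B < 6 := two_rpow_lt_six (by linarith)
  have hden : 0 < 1 - a / 2 := by linarith
  have hrw : B + a * ((B - 1) / (1 - a / 2)) = (B * (1 + a / 2) - a) / (1 - a / 2) := by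
    rw [eq_div_iff hden.ne', add_mul, mul_assoc, div_mul_cancel₀ _ hden.ne']
    ring
  rw [hrw]
  refine div_pos ?_ hden
  rcases le_total 0 a with ha | ha
  · nlinarith
  · nlinarith [mul_nonneg (sub_nonneg.2 hB6.le) (neg_nonneg.2 ha)]

theorem stmt_8 (a : ℝ) (h1 : -3 < a) (h2 : a < 1) :
    0 < (2 : ℝ) ^ (1 - a / 2) + a * ∫ s in (0:ℝ)..1, (1 + s ^ 2) ^ (-a / 2) :=
  (two_rpow_add_mul_div_pos h1 (by linarith)).trans_le <|
    add_le_add_right (le_mul_integral_one_add_sq_rpow_neg_half (by linarith)) _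
end

section
/- For 0 ≤ a < 1, the function f_a(t) = a t²[(2-a)t² - 2] / (4(1+t²)²) on (0,∞) attains its minimum at t = 1/√(3-a), with minimum value a/(4(a-4)), and this value is strictly greater than -1/4. -/
/-!
The whole statement rests on one identity: for `a ≠ 4`,
`f_a(t) - a / (4(a - 4)) = a ((3 - a) t² - 1)² / (4 (4 - a) (1 + t²)²)`.
For `0 ≤ a < 4` the right side is nonnegative and vanishes exactly when `t² = 1 / (3 - a)`.
-/

noncomputable def quarticRatio (a t : ℝ) : ℝ :=
  a * t ^ 2 * ((2 - a) * t ^ 2 - 2) / (4 * (1 + t ^ 2) ^ 2)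

lemma quarticRatio_sub_eq {a : ℝ} (ha : a ≠ 4) (t : ℝ) :
    quarticRatio a t - a / (4 * (a - 4)) =
      a * ((3 - a) * t ^ 2 - 1) ^ 2 / (4 * (4 - a) * (1 + t ^ 2) ^ 2) := by
  have h4a : 4 - a ≠ 0 := sub_ne_zero.mpr (Ne.symm ha)
  have ha4 : a - 4 ≠ 0 := sub_ne_zero.mpr ha
  unfold quarticRatio
  field_simp
  ring

lemma quarticRatio_eq_of_mul_sq_eq_one {a t : ℝ} (ha : a ≠ 4) (ht : (3 - a) * t ^ 2 = 1) :
    quarticRatio a t = a / (4 * (a - 4)) := by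
  have h := quarticRatio_sub_eq ha t
  rw [ht, sub_self, zero_pow two_ne_zero, mul_zero, zero_div, sub_eq_zero] at h
  exact h

lemma le_quarticRatio {a : ℝ} (h0 : 0 ≤ a) (h4 : a < 4) (t : ℝ) :
    a / (4 * (a - 4)) ≤ quarticRatio a t := by
  rw [← sub_nonneg, quarticRatio_sub_eq h4.ne t]
  have : 0 < 4 - a := sub_pos.mpr h4
  positivity

lemma neg_quarter_lt_div {a : ℝ} (h2 : a < 2) : -(1 / 4 : ℝ) < a / (4 * (a - 4)) := by
  rw [lt_div_iff_of_neg (by linarith)]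
  linarith

theorem stmt_9 (a : ℝ) (h0 : 0 ≤ a) (h1 : a < 1) :
    (∀ t : ℝ, 0 < t →
      a * (1 / Real.sqrt (3 - a)) ^ 2 * ((2 - a) * (1 / Real.sqrt (3 - a)) ^ 2 - 2) /
          (4 * (1 + (1 / Real.sqrt (3 - a)) ^ 2) ^ 2) ≤
        a * t ^ 2 * ((2 - a) * t ^ 2 - 2) / (4 * (1 + t ^ 2) ^ 2)) ∧
    a * (1 / Real.sqrt (3 - a)) ^ 2 * ((2 - a) * (1 / Real.sqrt (3 - a)) ^ 2 - 2) /
        (4 * (1 + (1 / Real.sqrt (3 - a)) ^ 2) ^ 2) = a / (4 * (a - 4)) ∧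
    -(1 / 4 : ℝ) < a / (4 * (a - 4)) := by
  have h3a : 0 < 3 - a := by linarith
  have hcrit : (3 - a) * (1 / Real.sqrt (3 - a)) ^ 2 = 1 := by
    rw [div_pow, one_pow, Real.sq_sqrt h3a.le, mul_one_div_cancel h3a.ne']
  have hmin : quarticRatio a (1 / Real.sqrt (3 - a)) = a / (4 * (a - 4)) :=
    quarticRatio_eq_of_mul_sq_eq_one (by linarith) hcrit
  refine ⟨fun t _ => ?_, hmin, neg_quarter_lt_div (by linarith)⟩
  exact hmin.trans_le (le_quarticRatio h0 (by linarith) t)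
end

section
/- For a < 0, the function f_a(t) = a t²[(2-a)t² - 2]/(4(1+t²)²) satisfies inf_{t>0} f_a(t) = lim_{t→+∞} f_a(t) = a(2-a)/4, and f_a(t) ≥ 0 for t ∈ (0, √(2/(2-a))]. -/
open Filter Topology Set

theorem isGLB_image_of_tendsto {β α : Type*} [TopologicalSpace α] [LinearOrder α]
    [ClosedIciTopology α] {l : Filter β} [l.NeBot] {f : β → α} {s : Set β} {L : α}
    (hs : s ∈ l) (hle : ∀ x ∈ s, L ≤ f x) (hf : Tendsto f l (𝓝 L)) : IsGLB (f '' s) L := by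
  refine ⟨forall_mem_image.2 hle, fun b hb => ge_of_tendsto hf ?_⟩
  filter_upwards [hs] with x hx
  exact hb (mem_image_of_mem f hx)

noncomputable def fa (a t : ℝ) : ℝ :=
  a * t ^ 2 * ((2 - a) * t ^ 2 - 2) / (4 * (1 + t ^ 2) ^ 2)

theorem fa_sub_limit (a t : ℝ) :
    fa a t - a * (2 - a) / 4 = -a * ((2 - a) + 2 * (3 - a) * t ^ 2) / (4 * (1 + t ^ 2) ^ 2) := by
  unfold fa
  field_simp
  ring

theorem limit_le_fa {a : ℝ} (ha : a ≤ 0) (t : ℝ) : a * (2 - a) / 4 ≤ fa a t := by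
  rw [← sub_nonneg, fa_sub_limit]
  have : 0 ≤ (2 - a) + 2 * (3 - a) * t ^ 2 := by nlinarith [sq_nonneg t]
  exact div_nonneg (mul_nonneg (neg_nonneg.2 ha) this) (by positivity)

-- With `u = t⁻²`, `fa a t` is a rational function of `u` that is continuous at `u = 0`.
theorem tendsto_fa_atTop (a : ℝ) : Tendsto (fa a) atTop (𝓝 (a * (2 - a) / 4)) := by
  set g : ℝ → ℝ := fun u => (a * (2 - a) - 2 * a * u) / (4 * (u + 1) ^ 2)
  have hg : ContinuousAt g 0 := ContinuousAt.div (by fun_prop) (by fun_prop) (by norm_num)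
  have hu : Tendsto (fun t : ℝ => (t ^ 2)⁻¹) atTop (𝓝 0) := by
    simpa using (tendsto_inv_atTop_zero (𝕜 := ℝ)).pow 2
  have hlim : g 0 = a * (2 - a) / 4 := by simp [g]
  refine hlim ▸ (hg.tendsto.comp hu).congr' ?_
  filter_upwards [eventually_ne_atTop 0] with t ht
  simp only [Function.comp, g, fa]
  field_simp

theorem fa_nonneg {a t : ℝ} (ha : a ≤ 0) (ht : (2 - a) * t ^ 2 ≤ 2) : 0 ≤ fa a t :=
  div_nonneg (mul_nonneg_of_nonpos_of_nonpos (mul_nonpos_of_nonpos_of_nonneg ha (sq_nonneg t))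
    (by linarith)) (by positivity)

theorem stmt_10 (a : ℝ) (ha : a < 0) :
    IsGLB ((fun t : ℝ => a * t ^ 2 * ((2 - a) * t ^ 2 - 2) / (4 * (1 + t ^ 2) ^ 2)) ''
        Set.Ioi 0) (a * (2 - a) / 4) ∧
    Filter.Tendsto (fun t : ℝ => a * t ^ 2 * ((2 - a) * t ^ 2 - 2) / (4 * (1 + t ^ 2) ^ 2))
      Filter.atTop (nhds (a * (2 - a) / 4)) ∧
    (∀ t : ℝ, 0 < t → t ≤ Real.sqrt (2 / (2 - a)) →
      0 ≤ a * t ^ 2 * ((2 - a) * t ^ 2 - 2) / (4 * (1 + t ^ 2) ^ 2)) := by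
  have h2a : 0 < 2 - a := by linarith
  refine ⟨isGLB_image_of_tendsto (Ioi_mem_atTop 0) (fun t _ => limit_le_fa ha.le t)
    (tendsto_fa_atTop a), tendsto_fa_atTop a, fun t ht hts => fa_nonneg ha.le ?_⟩
  have hsq : t ^ 2 ≤ 2 / (2 - a) := (Real.le_sqrt ht.le (by positivity)).mp hts
  rwa [le_div_iff₀ h2a, mul_comm] at hsq
end

section
/- The function v(t) = e^{t²/2} / (t ∫₀ᵗ e^{s²/2} ds) satisfies v(t) > 1 − 2/t² for all t > 0. -/
/-! For `t ≤ √2` the left side is `≤ 0`. For `t > √2` the claim amounts to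
`∫₀ᵗ e^{s²/2} ds < t / (t² - 2) · e^{t²/2}`. The difference of the two sides has derivative
`(t² - 6) / (t² - 2)² · e^{t²/2}`, so on `(√2, ∞)` it is smallest at `√6`, where its positivity is a
numerical check: bounding `s² / 2` by its chord on `[0, 2]` and on `[2, √6]` gives
`∫₀^{√6} e^{s²/2} ds ≤ (e² - 1) + (√6 - 2)(e³ - e²) < (√6 / 4) e³`. -/

open MeasureTheory Real Set

lemma continuous_exp_sq_half : Continuous fun s : ℝ => exp (s ^ 2 / 2) := by fun_prop

lemma integral_exp_sq_half_pos {t : ℝ} (ht : 0 < t) : 0 < ∫ s in (0:ℝ)..t, exp (s ^ 2 / 2) :=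
  intervalIntegral.intervalIntegral_pos_of_pos_on
    (continuous_exp_sq_half.intervalIntegrable _ _) (fun _ _ => exp_pos _) ht

lemma integral_exp_sq_half_le_of_chord {a b : ℝ} (hab : a ≤ b) (hab₀ : a + b ≠ 0) :
    ∫ s in a..b, exp (s ^ 2 / 2) ≤ 2 / (a + b) * (exp (b ^ 2 / 2) - exp (a ^ 2 / 2)) := by
  set chord : ℝ → ℝ := fun s => (a + b) / 2 * s - a * b / 2
  have hchord : ∀ s, HasDerivAt (fun u => 2 / (a + b) * exp (chord u)) (exp (chord s)) s := by
    intro s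
    have h := ((((hasDerivAt_id s).const_mul ((a + b) / 2)).sub_const (a * b / 2)).exp).const_mul
      (2 / (a + b))
    refine h.congr_deriv ?_
    simp only [chord, id, mul_one]
    field_simp
  have hchord_int :
      ∫ s in a..b, exp (chord s) = 2 / (a + b) * (exp (b ^ 2 / 2) - exp (a ^ 2 / 2)) := by
    rw [intervalIntegral.integral_eq_sub_of_hasDerivAt (fun s _ => hchord s)
      ((continuous_exp.comp (by fun_prop)).intervalIntegrable _ _)]
    simp only [chord]
    ring_nf
  rw [← hchord_int]
  refine intervalIntegral.integral_mono_on hab (continuous_exp_sq_half.intervalIntegrable _ _)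
    ((continuous_exp.comp (by fun_prop)).intervalIntegrable _ _) fun s hs => exp_le_exp.2 ?_
  simp only [chord]
  nlinarith [mul_nonneg (sub_nonneg.2 hs.1) (sub_nonneg.2 hs.2)]

lemma integral_exp_sq_half_sqrt_six_lt :
    ∫ s in (0:ℝ)..√6, exp (s ^ 2 / 2) < √6 / 4 * exp 3 := by
  have h6 : √6 ^ 2 = 6 := sq_sqrt (by norm_num)
  have h6lo : 2.449 < √6 := by rw [lt_sqrt (by norm_num)]; norm_num
  have h6hi : √6 < 2.4495 := by rw [sqrt_lt' (by norm_num)]; norm_num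
  have h02 := integral_exp_sq_half_le_of_chord (a := 0) (b := 2) (by norm_num) (by norm_num)
  have h26 := integral_exp_sq_half_le_of_chord (a := 2) (b := √6) (by linarith) (by linarith)
  have hcoef : 2 / (2 + √6) = √6 - 2 := by
    rw [div_eq_iff (by positivity)]
    nlinarith
  rw [hcoef, h6] at h26
  norm_num at h02 h26
  rw [← intervalIntegral.integral_add_adjacent_intervals (b := 2)
    (continuous_exp_sq_half.intervalIntegrable _ _) (continuous_exp_sq_half.intervalIntegrable _ _)]
  have he2 : exp 2 = exp 1 ^ 2 := by rw [← exp_nat_mul]; norm_num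
  have he3 : exp 3 = exp 1 ^ 3 := by rw [← exp_nat_mul]; norm_num
  rw [he2, he3] at h26
  rw [he2] at h02
  rw [he3]
  have he_lo := exp_one_gt_d9
  have he_hi := exp_one_lt_d9
  set e := exp 1
  have hcube : 0 < e ^ 2 * (3 * e / 4 - 1) := by nlinarith
  nlinarith [mul_pos (sub_pos.2 h6hi) hcube, mul_pos (sub_pos.2 he_lo) (sub_pos.2 he_hi)]

noncomputable def integralBoundGap (t : ℝ) : ℝ :=
  t / (t ^ 2 - 2) * exp (t ^ 2 / 2) - ∫ s in (0:ℝ)..t, exp (s ^ 2 / 2)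

lemma hasDerivAt_integralBoundGap {t : ℝ} (ht : t ^ 2 ≠ 2) :
    HasDerivAt integralBoundGap ((t ^ 2 - 6) / (t ^ 2 - 2) ^ 2 * exp (t ^ 2 / 2)) t := by
  have hden : t ^ 2 - 2 ≠ 0 := sub_ne_zero.2 ht
  have hsq : HasDerivAt (fun u : ℝ => u ^ 2) (2 * t) t := by
    simpa using hasDerivAt_pow 2 t
  have hfrac := (hasDerivAt_id' t).div (hsq.sub_const 2) hden
  have hexp := (hsq.div_const 2).exp
  have hint := (continuous_exp_sq_half.integral_hasStrictDerivAt 0 t).hasDerivAt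
  refine ((hfrac.mul hexp).sub hint).congr_deriv ?_
  simp only [Pi.div_apply]
  field_simp
  ring

lemma isMinOn_integralBoundGap : IsMinOn integralBoundGap (Ioi √2) √6 := by
  have hderiv : ∀ x ∈ Ioi √2, HasDerivAt integralBoundGap
      ((x ^ 2 - 6) / (x ^ 2 - 2) ^ 2 * exp (x ^ 2 / 2)) x := by
    intro x hx
    have hx2 : 2 < x ^ 2 := (sqrt_lt' ((sqrt_nonneg 2).trans_lt hx)).1 hx
    exact hasDerivAt_integralBoundGap hx2.ne'
  have h26 : √2 < √6 := sqrt_lt_sqrt (by norm_num) (by norm_num)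
  refine isMinOn_Ioi_of_deriv (hderiv _ h26).continuousAt
    (fun x hx => (hderiv x hx.1).differentiableAt.differentiableWithinAt)
    (fun x hx => (hderiv x (h26.trans hx)).differentiableAt.differentiableWithinAt)
    (fun x hx => ?_) (fun x hx => ?_)
  · have hx6 : x ^ 2 < 6 := (lt_sqrt ((sqrt_nonneg 2).trans hx.1.le)).1 hx.2
    rw [(hderiv x hx.1).deriv]
    exact mul_nonpos_of_nonpos_of_nonneg
      (div_nonpos_of_nonpos_of_nonneg (by linarith) (by positivity)) (exp_pos _).le
  · have hx6 : 6 < x ^ 2 := (sqrt_lt' ((sqrt_nonneg 6).trans_lt hx)).1 hx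
    rw [(hderiv x (h26.trans hx)).deriv]
    exact mul_nonneg (div_nonneg (by linarith) (by positivity)) (exp_pos _).le

lemma integral_exp_sq_half_lt {t : ℝ} (ht : √2 < t) :
    ∫ s in (0:ℝ)..t, exp (s ^ 2 / 2) < t / (t ^ 2 - 2) * exp (t ^ 2 / 2) := by
  have hmin : integralBoundGap √6 ≤ integralBoundGap t :=
    isMinOn_iff.1 isMinOn_integralBoundGap t ht
  have hpos : 0 < integralBoundGap √6 := by
    have := integral_exp_sq_half_sqrt_six_lt
    rw [integralBoundGap, sq_sqrt (by norm_num)]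
    norm_num
    linarith
  have h := hpos.trans_le hmin
  rw [integralBoundGap] at h
  linarith

theorem stmt_12 :
    ∀ t : ℝ, 0 < t →
      1 - 2 / t ^ 2 < Real.exp (t ^ 2 / 2) / (t * ∫ s in (0:ℝ)..t, Real.exp (s ^ 2 / 2)) := by
  intro t ht
  have hI := integral_exp_sq_half_pos ht
  set I := ∫ s in (0:ℝ)..t, exp (s ^ 2 / 2)
  rw [lt_div_iff₀ (by positivity)]
  rcases le_or_gt t √2 with hle | hgt
  · have ht2 : t ^ 2 ≤ 2 := (le_sqrt ht.le (by norm_num)).1 hle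
    have hcoef : 1 - 2 / t ^ 2 ≤ 0 := sub_nonpos.2 ((one_le_div₀ (by positivity)).2 ht2)
    calc (1 - 2 / t ^ 2) * (t * I) ≤ 0 := mul_nonpos_of_nonpos_of_nonneg hcoef (by positivity)
      _ < exp (t ^ 2 / 2) := exp_pos _
  · have ht2 : 2 < t ^ 2 := (sqrt_lt' ht).1 hgt
    have ht2' : 0 < t ^ 2 - 2 := by linarith
    calc (1 - 2 / t ^ 2) * (t * I) = (t ^ 2 - 2) / t * I := by field_simp
      _ < (t ^ 2 - 2) / t * (t / (t ^ 2 - 2) * exp (t ^ 2 / 2)) := by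
        gcongr
        exact integral_exp_sq_half_lt hgt
      _ = exp (t ^ 2 / 2) := by field_simp
end

section
/- Let a < 1 and ε ≥ 0, and let ρ_ε^a(y) = (ε² + y²)^{a/2}. Then there is a constant c > 0 independent of ε such that for all y > 0: |d/dy log(π_ε^a(y))| ≤ 2·max{1, 1-a}/y, where π_ε^a(y) = ((1-a)∫₀^y ρ_ε^{-a}(s) ds)². -/
/-!
Write `ρ(s) = (ε² + s²)^(-a/2)`. The logarithmic derivative is `2ρ(y) / ∫₀^y ρ`, so the bound
amounts to `y ρ(y) ≤ max(1, 1-a) ∫₀^y ρ`. With `c = max(0, -a)` one has `ρ(s) ≥ ρ(y) (s/y)^c`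
for `0 < s ≤ y`: for `a ≥ 0` because `ρ` is nonincreasing, for `a < 0` because
`ε² + s² ≥ (ε² + y²)(s/y)²`. Integrating gives `∫₀^y ρ ≥ ρ(y) y / (1 + c)`, and
`1 + c = max(1, 1-a)`.
-/

open MeasureTheory Set intervalIntegral

lemma intervalIntegrable_rpow_sq_add_sq {a : ℝ} (ha : a < 1) (ε : ℝ) {y : ℝ} (hy : 0 ≤ y) :
    IntervalIntegrable (fun s : ℝ => (ε ^ 2 + s ^ 2) ^ (-a / 2)) volume 0 y := by
  rcases eq_or_ne ε 0 with rfl | hε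
  · have hpow : IntervalIntegrable (fun s : ℝ => s ^ (-a)) volume 0 y :=
      intervalIntegrable_rpow' (by linarith)
    rw [intervalIntegrable_iff_integrableOn_Ioc_of_le hy] at hpow ⊢
    refine hpow.congr_fun (fun s hs => ?_) measurableSet_Ioc
    rw [zero_pow two_ne_zero, zero_add, ← Real.rpow_natCast, ← Real.rpow_mul hs.1.le,
      Nat.cast_ofNat, mul_div_cancel₀ _ two_ne_zero]
  · refine Continuous.intervalIntegrable ?_ 0 y
    exact (continuous_const.add (continuous_pow 2)).rpow_const fun s =>
      Or.inl (show ε ^ 2 + s ^ 2 ≠ 0 by positivity)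

lemma rpow_sq_add_sq_mul_div_rpow_le (a ε : ℝ) {s y : ℝ} (hs : 0 < s) (hsy : s ≤ y) :
    (ε ^ 2 + y ^ 2) ^ (-a / 2) * (s / y) ^ max 0 (-a) ≤ (ε ^ 2 + s ^ 2) ^ (-a / 2) := by
  have hy : 0 < y := hs.trans_le hsy
  rcases le_or_gt 0 a with ha | ha
  · rw [max_eq_left (by linarith), Real.rpow_zero, mul_one]
    exact Real.rpow_le_rpow_of_nonpos (by positivity) (by gcongr) (by linarith)
  · have hdiv : 0 ≤ s / y := by positivity
    have hbase : (ε ^ 2 + y ^ 2) * (s / y) ^ 2 ≤ ε ^ 2 + s ^ 2 := by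
      have hle : (s / y) ^ 2 ≤ 1 := pow_le_one₀ hdiv ((div_le_one hy).2 hsy)
      have : (s / y) ^ 2 * y ^ 2 = s ^ 2 := by field_simp
      nlinarith [sq_nonneg ε]
    have hpow : (s / y) ^ (-a) = ((s / y) ^ 2) ^ (-a / 2) := by
      rw [← Real.rpow_natCast, ← Real.rpow_mul hdiv]
      congr 1
      ring
    rw [max_eq_right (by linarith), hpow, ← Real.mul_rpow (by positivity) (by positivity)]
    exact Real.rpow_le_rpow (by positivity) hbase (by linarith)

lemma integral_div_rpow {c : ℝ} (hc : -1 < c) {y : ℝ} (hy : y ≠ 0) :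
    ∫ s in (0 : ℝ)..y, (s / y) ^ c = y / (c + 1) := by
  rw [integral_comp_div (· ^ c) hy, zero_div, div_self hy,
    integral_rpow (Or.inl hc), Real.one_rpow, Real.zero_rpow (by linarith), smul_eq_mul]
  ring

lemma mul_rpow_sq_add_sq_le_integral {a : ℝ} (ha : a < 1) (ε : ℝ) {y : ℝ} (hy : 0 < y) :
    y * (ε ^ 2 + y ^ 2) ^ (-a / 2) ≤
      max 1 (1 - a) * ∫ s in (0 : ℝ)..y, (ε ^ 2 + s ^ 2) ^ (-a / 2) := by
  have hc : max 0 (-a) + 1 = max 1 (1 - a) := by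
    rw [← max_add_add_right, zero_add, neg_add_eq_sub]
  have hcomp : ∫ s in (0 : ℝ)..y, (ε ^ 2 + y ^ 2) ^ (-a / 2) * (s / y) ^ max 0 (-a) ≤
      ∫ s in (0 : ℝ)..y, (ε ^ 2 + s ^ 2) ^ (-a / 2) := integral_mono_on_of_le_Ioo hy.le
    (Continuous.intervalIntegrable (continuous_const.mul
      ((continuous_id.div_const y).rpow_const fun _ => Or.inr (le_max_left _ _))) 0 y)
    (intervalIntegrable_rpow_sq_add_sq ha ε hy.le)
    fun s hs => rpow_sq_add_sq_mul_div_rpow_le a ε hs.1 hs.2.le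
  rw [intervalIntegral.integral_const_mul,
    integral_div_rpow (neg_one_lt_zero.trans_le (le_max_left _ _)) hy.ne', hc, mul_div_assoc',
    div_le_iff₀ (by positivity)] at hcomp
  linarith

lemma hasDerivAt_integral_rpow_sq_add_sq {a : ℝ} (ha : a < 1) (ε : ℝ) {y : ℝ} (hy : 0 < y) :
    HasDerivAt (fun t => ∫ s in (0 : ℝ)..t, (ε ^ 2 + s ^ 2) ^ (-a / 2))
      ((ε ^ 2 + y ^ 2) ^ (-a / 2)) y := by
  have hcont : ContinuousOn (fun s : ℝ => (ε ^ 2 + s ^ 2) ^ (-a / 2)) (Ioi 0) :=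
    fun s hs => ((continuous_const.add (continuous_pow 2)).continuousAt.rpow_const
      (Or.inl (show ε ^ 2 + s ^ 2 ≠ 0 by have : 0 < s := hs; positivity))).continuousWithinAt
  exact integral_hasDerivAt_right (intervalIntegrable_rpow_sq_add_sq ha ε hy.le)
    (hcont.stronglyMeasurableAtFilter isOpen_Ioi y hy) (hcont.continuousAt (Ioi_mem_nhds hy))

lemma HasDerivAt.log_const_mul_sq {F : ℝ → ℝ} {F' c y : ℝ} (hF : HasDerivAt F F' y)
    (hc : c ≠ 0) (hFy : F y ≠ 0) :
    HasDerivAt (fun t => Real.log ((c * F t) ^ 2)) (2 * F' / F y) y := by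
  convert ((hF.const_mul c).fun_pow 2).log (pow_ne_zero 2 (mul_ne_zero hc hFy)) using 1
  field_simp
  ring

theorem stmt_15 (a : ℝ) (ha : a < 1) :
    ∀ ε : ℝ, 0 ≤ ε → ∀ y : ℝ, 0 < y →
      |deriv (fun t : ℝ =>
          Real.log (((1 - a) * ∫ s in (0:ℝ)..t, (ε ^ 2 + s ^ 2) ^ (-a / 2)) ^ 2)) y| ≤
        2 * max 1 (1 - a) / y := by
  intro ε _ y hy
  have hρy : 0 < (ε ^ 2 + y ^ 2) ^ (-a / 2) := Real.rpow_pos_of_pos (by positivity) _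
  have hkey := mul_rpow_sq_add_sq_le_integral ha ε hy
  have hI : 0 < ∫ s in (0 : ℝ)..y, (ε ^ 2 + s ^ 2) ^ (-a / 2) :=
    pos_of_mul_pos_right ((mul_pos hy hρy).trans_le hkey) (by positivity)
  rw [((hasDerivAt_integral_rpow_sq_add_sq ha ε hy).log_const_mul_sq (by linarith) hI.ne').deriv,
    abs_of_pos (by positivity), div_le_div_iff₀ hI hy]
  linarith
end

section
/- Let a < 1, α ∈ (0,1), γ ∈ C^{0,α}(B₁⁺). Then the family of functions G_ε(x,y) = ∫₀^y (ε²+s²)^{-a/2}(γ(x,s) − γ(x,0)) ds / ∫₀^y (ε²+s²)^{-a/2} ds, ε ∈ [0,1], is uniformly bounded in C^{0,α}(B₁⁺) by a constant independent of ε, depending only on a, α, and the C^{0,α} norm of γ. -/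
/-!
`G_ε(x, ·)` is the average of `γ(x, ·) - γ(x, 0)` over `[0, y]` against the weight
`w_ε(s) = (ε² + s²)^(-a/2)`, which is integrable at `0` because `a < 1`. As
`|γ(x, s) - γ(x, 0)| ≤ K s^α`, the average is at most `K y^α`, and the averages of
`γ(x₁, ·)` and `γ(x₂, ·)` differ by at most `2K |x₁ - x₂|^α`. For `y₁ ≤ y₂` the averages over
`[0, y₁]` and `[0, y₂]` differ by at most `2K y₂^α` times the relative weight of `[y₁, y₂]` in
`[0, y₂]`. Since `w_ε` varies by at most the factor `4^(|a|/2)` on `[y₂/2, y₂]`, whatever `ε`,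
this relative weight is `O((y₂ - y₁) / y₂)`, and `y₂^α (y₂ - y₁) / y₂ ≤ (y₂ - y₁)^α`.
-/

open MeasureTheory intervalIntegral Set Filter Topology

lemma continuous_of_abs_sub_le_mul_rpow {f : ℝ → ℝ} {K α : ℝ} (hα : 0 < α)
    (h : ∀ s t, |f s - f t| ≤ K * |s - t| ^ α) : Continuous f := by
  refine continuous_iff_continuousAt.2 fun t => tendsto_iff_dist_tendsto_zero.2 ?_
  have hlim : Tendsto (fun s => K * |s - t| ^ α) (𝓝 t) (𝓝 (K * |t - t| ^ α)) :=
    ((continuous_abs.comp (continuous_id.sub continuous_const)).rpow_const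
      fun _ => Or.inr hα.le).const_mul K |>.tendsto t
  rw [sub_self, abs_zero, Real.zero_rpow hα.ne', mul_zero] at hlim
  exact squeeze_zero (fun _ => dist_nonneg) (fun s => h s t) hlim

lemma rpow_le_rpow_abs_mul_rpow {p q c : ℝ} (hp : 0 < p) (hc : 1 ≤ c) (hqp : q ≤ c * p)
    (hpq : p ≤ c * q) (b : ℝ) : q ^ b ≤ c ^ |b| * p ^ b := by
  have hc0 : 0 < c := by linarith
  have hq : 0 < q := pos_of_mul_pos_right (hp.trans_le hpq) hc0.le
  rcases le_total 0 b with hb | hb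
  · calc q ^ b ≤ (c * p) ^ b := Real.rpow_le_rpow hq.le hqp hb
      _ = c ^ |b| * p ^ b := by rw [abs_of_nonneg hb, Real.mul_rpow hc0.le hp.le]
  · calc q ^ b ≤ (p / c) ^ b :=
          Real.rpow_le_rpow_of_nonpos (by positivity) ((div_le_iff₀' hc0).2 hpq) hb
      _ = c ^ |b| * p ^ b := by
          rw [abs_of_nonpos hb, Real.div_rpow hp.le hc0.le, Real.rpow_neg hc0.le]; ring

lemma rpow_mul_div_le_rpow {d y α : ℝ} (hd : 0 ≤ d) (hdy : d ≤ y) (hα : α ≤ 1) :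
    y ^ α * (d / y) ≤ d ^ α := by
  rcases (hd.trans hdy).eq_or_lt with rfl | hy
  · rw [div_zero, mul_zero]
    exact Real.rpow_nonneg hd α
  calc y ^ α * (d / y) ≤ y ^ α * (d / y) ^ α := by
        gcongr
        exact Real.self_le_rpow_of_le_one (by positivity) (div_le_one_of_le₀ hdy hy.le) hα
    _ = d ^ α := by rw [← Real.mul_rpow hy.le (by positivity), mul_div_cancel₀ _ hy.ne']

noncomputable def weightedAvg (w g : ℝ → ℝ) (y : ℝ) : ℝ :=
  (∫ s in (0:ℝ)..y, w s * g s) / ∫ s in (0:ℝ)..y, w s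

section WeightedAvg

variable {w g : ℝ → ℝ} {B : ℝ}

lemma abs_integral_mul_le {a b : ℝ} (hab : a ≤ b) (hw : IntervalIntegrable w volume a b)
    (hw0 : ∀ s, 0 ≤ w s) (hg : ∀ s ∈ Ioc a b, |g s| ≤ B) :
    |∫ s in a..b, w s * g s| ≤ B * ∫ s in a..b, w s := by
  rw [← intervalIntegral.integral_const_mul, ← Real.norm_eq_abs]
  refine norm_integral_le_of_norm_le hab (ae_of_all _ fun s hs => ?_) (hw.const_mul B)
  rw [Real.norm_eq_abs, abs_mul, abs_of_nonneg (hw0 s), mul_comm]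
  exact mul_le_mul_of_nonneg_right (hg s hs) (hw0 s)

lemma abs_weightedAvg_le {y : ℝ} (hy : 0 ≤ y) (hw : IntervalIntegrable w volume 0 y)
    (hw0 : ∀ s, 0 ≤ w s) (hD : 0 < ∫ s in (0:ℝ)..y, w s)
    (hg : ∀ s ∈ Ioc 0 y, |g s| ≤ B) : |weightedAvg w g y| ≤ B := by
  rw [weightedAvg, abs_div, abs_of_pos hD, div_le_iff₀ hD]
  exact abs_integral_mul_le hy hw hw0 hg

lemma weightedAvg_sub {g₁ g₂ : ℝ → ℝ} {y : ℝ}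
    (h₁ : IntervalIntegrable (fun s => w s * g₁ s) volume 0 y)
    (h₂ : IntervalIntegrable (fun s => w s * g₂ s) volume 0 y) :
    weightedAvg w g₁ y - weightedAvg w g₂ y = weightedAvg w (fun s => g₁ s - g₂ s) y := by
  simp only [weightedAvg, mul_sub, integral_sub h₁ h₂, sub_div]

lemma abs_weightedAvg_sub_le {y₁ y₂ : ℝ} (hy₁ : 0 ≤ y₁) (h12 : y₁ ≤ y₂)
    (hw : IntervalIntegrable w volume 0 y₂) (hw0 : ∀ s, 0 ≤ w s)
    (hD₁ : 0 < ∫ s in (0:ℝ)..y₁, w s)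
    (hwg : IntervalIntegrable (fun s => w s * g s) volume 0 y₂)
    (hg : ∀ s ∈ Ioc 0 y₂, |g s| ≤ B) :
    |weightedAvg w g y₁ - weightedAvg w g y₂| ≤
      2 * B * (∫ s in y₁..y₂, w s) / ∫ s in (0:ℝ)..y₂, w s := by
  have hsub : uIcc 0 y₁ ⊆ uIcc 0 y₂ :=
    uIcc_subset_uIcc left_mem_uIcc (mem_uIcc_of_le hy₁ h12)
  have hT := integral_interval_sub_left hw (hw.mono_set hsub)
  have hM := integral_interval_sub_left hwg (hwg.mono_set hsub)
  have hT0 : 0 ≤ ∫ s in y₁..y₂, w s := integral_nonneg h12 fun s _ => hw0 s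
  have hD₂ : 0 < ∫ s in (0:ℝ)..y₂, w s := by linarith
  have hG₁ : |weightedAvg w g y₁| ≤ B :=
    abs_weightedAvg_le hy₁ (hw.mono_set hsub) hw0 hD₁ fun s hs =>
      hg s (Ioc_subset_Ioc_right h12 hs)
  have hMT : |∫ s in y₁..y₂, w s * g s| ≤ B * ∫ s in y₁..y₂, w s :=
    abs_integral_mul_le h12 (hw.mono_set (uIcc_subset_uIcc (mem_uIcc_of_le hy₁ h12)
      right_mem_uIcc)) hw0 fun s hs => hg s ⟨hy₁.trans_lt hs.1, hs.2⟩
  have hdiff : weightedAvg w g y₁ - weightedAvg w g y₂ =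
      (weightedAvg w g y₁ * (∫ s in y₁..y₂, w s) - ∫ s in y₁..y₂, w s * g s) /
        ∫ s in (0:ℝ)..y₂, w s := by
    rw [← hT, ← hM]
    simp only [weightedAvg]
    field_simp
    ring
  rw [hdiff, abs_div, abs_of_pos hD₂]
  gcongr
  calc _ ≤ |weightedAvg w g y₁ * ∫ s in y₁..y₂, w s| + |∫ s in y₁..y₂, w s * g s| :=
        abs_sub _ _
    _ = |weightedAvg w g y₁| * (∫ s in y₁..y₂, w s) + |∫ s in y₁..y₂, w s * g s| := by
        rw [abs_mul, abs_of_nonneg hT0]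
    _ ≤ B * (∫ s in y₁..y₂, w s) + B * ∫ s in y₁..y₂, w s := by gcongr
    _ = 2 * B * ∫ s in y₁..y₂, w s := by ring

end WeightedAvg

noncomputable def regWeight (ε a s : ℝ) : ℝ := (ε ^ 2 + s ^ 2) ^ (-a / 2)

section RegWeight

variable {ε a : ℝ}

lemma regWeight_nonneg (s : ℝ) : 0 ≤ regWeight ε a s := Real.rpow_nonneg (by positivity) _

lemma regWeight_pos {s : ℝ} (hs : 0 < s) : 0 < regWeight ε a s :=
  Real.rpow_pos_of_pos (by positivity) _

/-- For `a > 0` the weight is dominated by the integrable singularity `s ^ (-a)`. -/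
lemma intervalIntegrable_regWeight (ha : a < 1) {y : ℝ} (hy : 0 ≤ y) :
    IntervalIntegrable (regWeight ε a) volume 0 y := by
  rcases le_or_gt a 0 with ha0 | ha0
  · exact (((continuous_const.add (continuous_pow 2)).rpow_const fun _ =>
      Or.inr (by linarith))).intervalIntegrable 0 y
  refine (intervalIntegrable_rpow' (r := -a) (by linarith)).mono_fun'
    (Measurable.aestronglyMeasurable (by unfold regWeight; fun_prop)) ?_
  filter_upwards [ae_restrict_mem measurableSet_uIoc] with s hs
  rw [uIoc_of_le hy] at hs
  rw [Real.norm_eq_abs, abs_of_nonneg (regWeight_nonneg s)]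
  calc regWeight ε a s ≤ (s ^ 2) ^ (-a / 2) :=
        Real.rpow_le_rpow_of_nonpos (by nlinarith [hs.1]) (by nlinarith) (by linarith)
    _ = s ^ (-a) := by
        rw [← Real.rpow_natCast, ← Real.rpow_mul hs.1.le]; congr 1; ring

lemma integral_regWeight_pos (ha : a < 1) {y : ℝ} (hy : 0 < y) :
    0 < ∫ s in (0:ℝ)..y, regWeight ε a s :=
  intervalIntegral_pos_of_pos_on (intervalIntegrable_regWeight ha hy.le)
    (fun _ hs => regWeight_pos hs.1) hy

lemma regWeight_le_mul {s u : ℝ} (hu : 0 < u) (hsu : s ≤ 2 * u) (hus : u ≤ 2 * s) :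
    regWeight ε a s ≤ 4 ^ (|a| / 2) * regWeight ε a u := by
  have hs : 0 < s := by linarith
  have h : |-a / 2| = |a| / 2 := by rw [abs_div, abs_neg, abs_two]
  rw [regWeight, regWeight, ← h]
  exact rpow_le_rpow_abs_mul_rpow (by positivity) (by norm_num) (by nlinarith) (by nlinarith) _

lemma mul_regWeight_le_integral (ha : a < 1) {y : ℝ} (hy : 0 < y) :
    y / 2 * regWeight ε a y ≤ 4 ^ (|a| / 2) * ∫ s in (0:ℝ)..y, regWeight ε a s := by
  have hI : IntervalIntegrable (regWeight ε a) volume 0 y := intervalIntegrable_regWeight ha hy.le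
  have hI' : IntervalIntegrable (regWeight ε a) volume (y / 2) y :=
    hI.mono_set (uIcc_subset_uIcc (mem_uIcc_of_le (by linarith) (by linarith)) right_mem_uIcc)
  calc y / 2 * regWeight ε a y = ∫ _ in (y / 2)..y, regWeight ε a y := by
        rw [intervalIntegral.integral_const, smul_eq_mul]; ring
    _ ≤ ∫ s in (y / 2)..y, 4 ^ (|a| / 2) * regWeight ε a s :=
        integral_mono_on (by linarith) intervalIntegrable_const (hI'.const_mul _) fun s hs =>
          regWeight_le_mul (by linarith [hs.1]) (by linarith [hs.1]) (by linarith [hs.2])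
    _ = 4 ^ (|a| / 2) * ∫ s in (y / 2)..y, regWeight ε a s := integral_const_mul _ _
    _ ≤ 4 ^ (|a| / 2) * ∫ s in (0:ℝ)..y, regWeight ε a s := by
        gcongr
        exact integral_mono_interval (by linarith) (by linarith) le_rfl
          (ae_of_all _ regWeight_nonneg) hI

/-- Trivial when `y₁ ≤ y₂ / 2`; otherwise the weight on `[y₁, y₂]` is comparable to
`regWeight ε a y₂`, as it is on `[y₂ / 2, y₂]`. -/
lemma integral_regWeight_mul_le (ha : a < 1) {y₁ y₂ : ℝ} (hy₁ : 0 < y₁) (h12 : y₁ ≤ y₂) :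
    (∫ s in y₁..y₂, regWeight ε a s) * y₂ ≤
      2 * 4 ^ |a| * (y₂ - y₁) * ∫ s in (0:ℝ)..y₂, regWeight ε a s := by
  have hR : (1:ℝ) ≤ 4 ^ (|a| / 2) := Real.one_le_rpow (by norm_num) (by positivity)
  have hR2 : (4:ℝ) ^ |a| = 4 ^ (|a| / 2) * 4 ^ (|a| / 2) := by
    rw [← Real.rpow_add (by norm_num)]; ring_nf
  have hI : IntervalIntegrable (regWeight ε a) volume 0 y₂ :=
    intervalIntegrable_regWeight ha (hy₁.le.trans h12)
  have hD : 0 ≤ ∫ s in (0:ℝ)..y₂, regWeight ε a s :=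
    (integral_regWeight_pos ha (hy₁.trans_le h12)).le
  rcases le_total y₂ (2 * (y₂ - y₁)) with hfar | hnear
  · have hTD : ∫ s in y₁..y₂, regWeight ε a s ≤ ∫ s in (0:ℝ)..y₂, regWeight ε a s :=
      integral_mono_interval hy₁.le h12 le_rfl (ae_of_all _ regWeight_nonneg) hI
    calc _ ≤ (∫ s in (0:ℝ)..y₂, regWeight ε a s) * (2 * (y₂ - y₁)) :=
          mul_le_mul hTD hfar (by linarith) hD
      _ ≤ _ := by
          rw [hR2]
          nlinarith [mul_le_mul_of_nonneg_right (one_le_mul_of_one_le_of_one_le hR hR)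
            (mul_nonneg (sub_nonneg.2 h12) hD)]
  · have hT : ∫ s in y₁..y₂, regWeight ε a s ≤
        (y₂ - y₁) * (4 ^ (|a| / 2) * regWeight ε a y₂) := by
      calc _ ≤ ∫ _ in y₁..y₂, 4 ^ (|a| / 2) * regWeight ε a y₂ :=
            integral_mono_on h12
              (hI.mono_set (uIcc_subset_uIcc (mem_uIcc_of_le hy₁.le h12) right_mem_uIcc))
              intervalIntegrable_const fun s hs =>
                regWeight_le_mul (by linarith) (by linarith [hs.2]) (by linarith [hs.1])
        _ = _ := by rw [intervalIntegral.integral_const, smul_eq_mul]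
    calc _ ≤ (y₂ - y₁) * (4 ^ (|a| / 2) * regWeight ε a y₂) * y₂ :=
          mul_le_mul_of_nonneg_right hT (by linarith)
      _ = 2 * 4 ^ (|a| / 2) * (y₂ - y₁) * (y₂ / 2 * regWeight ε a y₂) := by ring
      _ ≤ 2 * 4 ^ (|a| / 2) * (y₂ - y₁) *
            (4 ^ (|a| / 2) * ∫ s in (0:ℝ)..y₂, regWeight ε a s) := by
          have := sub_nonneg.2 h12
          exact mul_le_mul_of_nonneg_left (mul_regWeight_le_integral ha (hy₁.trans_le h12))
            (by positivity)
      _ = _ := by rw [hR2]; ring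

end RegWeight

section HolderAverage

variable {ε a K α : ℝ} {g : ℝ → ℝ}

lemma abs_le_mul_rpow_of_mem_Ioc (hα : 0 ≤ α) (hK : 0 ≤ K) (hgK : ∀ s, |g s| ≤ K * |s| ^ α)
    {y : ℝ} : ∀ s ∈ Ioc 0 y, |g s| ≤ K * y ^ α := fun s hs =>
  (hgK s).trans <| by
    rw [abs_of_pos hs.1]; exact mul_le_mul_of_nonneg_left (Real.rpow_le_rpow hs.1.le hs.2 hα) hK

lemma abs_weightedAvg_regWeight_le (ha : a < 1) (hα : 0 ≤ α) (hK : 0 ≤ K)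
    (hgK : ∀ s, |g s| ≤ K * |s| ^ α) {y : ℝ} (hy : 0 < y) :
    |weightedAvg (regWeight ε a) g y| ≤ K * y ^ α :=
  abs_weightedAvg_le hy.le (intervalIntegrable_regWeight ha hy.le) regWeight_nonneg
    (integral_regWeight_pos ha hy) (abs_le_mul_rpow_of_mem_Ioc hα hK hgK)

lemma abs_weightedAvg_regWeight_sub_le (ha : a < 1) (hα0 : 0 ≤ α) (hα1 : α ≤ 1) (hK : 0 ≤ K)
    (hg : Continuous g) (hgK : ∀ s, |g s| ≤ K * |s| ^ α) {y₁ y₂ : ℝ} (hy₁ : 0 < y₁)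
    (hy₂ : 0 < y₂) :
    |weightedAvg (regWeight ε a) g y₁ - weightedAvg (regWeight ε a) g y₂| ≤
      4 * 4 ^ |a| * K * |y₁ - y₂| ^ α := by
  wlog h12 : y₁ ≤ y₂ generalizing y₁ y₂
  · rw [abs_sub_comm, abs_sub_comm y₁]
    exact this hy₂ hy₁ (le_of_not_ge h12)
  have hI : IntervalIntegrable (regWeight ε a) volume 0 y₂ :=
    intervalIntegrable_regWeight ha hy₂.le
  have hD := integral_regWeight_pos (ε := ε) ha hy₂
  have hratio : (∫ s in y₁..y₂, regWeight ε a s) / ∫ s in (0:ℝ)..y₂, regWeight ε a s ≤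
      2 * 4 ^ |a| * ((y₂ - y₁) / y₂) := by
    rw [div_le_iff₀ hD, mul_div_assoc', div_mul_eq_mul_div, le_div_iff₀ hy₂]
    exact integral_regWeight_mul_le ha hy₁ h12
  calc _ ≤ 2 * (K * y₂ ^ α) * (∫ s in y₁..y₂, regWeight ε a s) /
          ∫ s in (0:ℝ)..y₂, regWeight ε a s :=
        abs_weightedAvg_sub_le hy₁.le h12 hI regWeight_nonneg (integral_regWeight_pos ha hy₁)
          (hI.mul_continuousOn hg.continuousOn) (abs_le_mul_rpow_of_mem_Ioc hα0 hK hgK)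
    _ ≤ 2 * (K * y₂ ^ α) * (2 * 4 ^ |a| * ((y₂ - y₁) / y₂)) := by
        rw [mul_div_assoc]; gcongr
    _ = 4 * 4 ^ |a| * K * (y₂ ^ α * ((y₂ - y₁) / y₂)) := by ring
    _ ≤ 4 * 4 ^ |a| * K * |y₁ - y₂| ^ α := by
        rw [abs_sub_comm, abs_of_nonneg (sub_nonneg.2 h12)]
        gcongr
        exact rpow_mul_div_le_rpow (sub_nonneg.2 h12) (by linarith) hα1

lemma abs_weightedAvg_regWeight_sub_le_of_abs_sub_le (ha : a < 1) {g₁ g₂ : ℝ → ℝ}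
    (hg₁ : Continuous g₁) (hg₂ : Continuous g₂) {L : ℝ} (hL : ∀ s, |g₁ s - g₂ s| ≤ L) {y : ℝ}
    (hy : 0 < y) :
    |weightedAvg (regWeight ε a) g₁ y - weightedAvg (regWeight ε a) g₂ y| ≤ L := by
  have hI : IntervalIntegrable (regWeight ε a) volume 0 y := intervalIntegrable_regWeight ha hy.le
  rw [weightedAvg_sub (hI.mul_continuousOn hg₁.continuousOn)
    (hI.mul_continuousOn hg₂.continuousOn)]
  exact abs_weightedAvg_le hy.le hI regWeight_nonneg (integral_regWeight_pos ha hy)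
    fun s _ => hL s

end HolderAverage

theorem stmt_18 (n : ℕ) (a α K : ℝ) (ha : a < 1) (hα : α ∈ Set.Ioo (0:ℝ) 1) (hK : 0 ≤ K) :
    ∃ C > (0 : ℝ), ∀ γ : EuclideanSpace ℝ (Fin n) → ℝ → ℝ,
      (∀ x₁ s₁ x₂ s₂, |γ x₁ s₁ - γ x₂ s₂| ≤ K * (‖x₁ - x₂‖ + |s₁ - s₂|) ^ α) →
      (∀ x s, |γ x s| ≤ K) →
      ∀ ε ∈ Set.Icc (0:ℝ) 1,
        (∀ x : EuclideanSpace ℝ (Fin n), ∀ y : ℝ, ‖x‖ ^ 2 + y ^ 2 < 1 → 0 < y →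
          |(∫ s in (0:ℝ)..y, (ε ^ 2 + s ^ 2) ^ (-a / 2) * (γ x s - γ x 0)) /
              ∫ s in (0:ℝ)..y, (ε ^ 2 + s ^ 2) ^ (-a / 2)| ≤ C) ∧
        (∀ x₁ x₂ : EuclideanSpace ℝ (Fin n), ∀ y₁ y₂ : ℝ,
          ‖x₁‖ ^ 2 + y₁ ^ 2 < 1 → 0 < y₁ → ‖x₂‖ ^ 2 + y₂ ^ 2 < 1 → 0 < y₂ →
          |(∫ s in (0:ℝ)..y₁, (ε ^ 2 + s ^ 2) ^ (-a / 2) * (γ x₁ s - γ x₁ 0)) /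
              (∫ s in (0:ℝ)..y₁, (ε ^ 2 + s ^ 2) ^ (-a / 2)) -
            (∫ s in (0:ℝ)..y₂, (ε ^ 2 + s ^ 2) ^ (-a / 2) * (γ x₂ s - γ x₂ 0)) /
              (∫ s in (0:ℝ)..y₂, (ε ^ 2 + s ^ 2) ^ (-a / 2))| ≤
            C * (‖x₁ - x₂‖ ^ α + |y₁ - y₂| ^ α)) := by
  obtain ⟨hα0, hα1⟩ := hα
  have hR : (1:ℝ) ≤ 4 ^ |a| := Real.one_le_rpow (by norm_num) (abs_nonneg a)
  refine ⟨4 * 4 ^ |a| * (K + 1), by positivity, fun γ hγ _ ε _ => ?_⟩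
  set G : EuclideanSpace ℝ (Fin n) → ℝ → ℝ := fun x => weightedAvg (regWeight ε a)
    fun s => γ x s - γ x 0
  have hgK : ∀ x s, |γ x s - γ x 0| ≤ K * |s| ^ α := fun x s => by simpa using hγ x s x 0
  have hg : ∀ x, Continuous fun s => γ x s - γ x 0 := fun x =>
    (continuous_of_abs_sub_le_mul_rpow hα0 fun s t => by simpa using hγ x s x t).sub
      continuous_const
  have hgx : ∀ x₁ x₂ s, |(γ x₁ s - γ x₁ 0) - (γ x₂ s - γ x₂ 0)| ≤
      2 * K * ‖x₁ - x₂‖ ^ α := by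
    intro x₁ x₂ s
    have h₁ := hγ x₁ s x₂ s
    have h₂ := hγ x₁ 0 x₂ 0
    simp only [sub_self, abs_zero, add_zero] at h₁ h₂
    rw [sub_sub_sub_comm]
    linarith [abs_sub (γ x₁ s - γ x₂ s) (γ x₁ 0 - γ x₂ 0)]
  refine ⟨fun x y hxy hy => ?_, fun x₁ x₂ y₁ y₂ _ hy₁ _ hy₂ => ?_⟩
  · have hy1 : y ≤ 1 := by nlinarith [norm_nonneg x]
    calc |G x y| ≤ K * y ^ α := abs_weightedAvg_regWeight_le ha hα0.le hK (hgK x) hy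
      _ ≤ K := mul_le_of_le_one_right hK (Real.rpow_le_one hy.le hy1 hα0.le)
      _ ≤ _ := by nlinarith
  · calc |G x₁ y₁ - G x₂ y₂| ≤ |G x₁ y₁ - G x₂ y₁| + |G x₂ y₁ - G x₂ y₂| := abs_sub_le _ _ _
      _ ≤ 2 * K * ‖x₁ - x₂‖ ^ α + 4 * 4 ^ |a| * K * |y₁ - y₂| ^ α :=
        add_le_add
          (abs_weightedAvg_regWeight_sub_le_of_abs_sub_le ha (hg x₁) (hg x₂) (hgx x₁ x₂) hy₁)
          (abs_weightedAvg_regWeight_sub_le ha hα0.le hα1.le hK (hg x₂) (hgK x₂) hy₁ hy₂)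
      _ ≤ 4 * 4 ^ |a| * (K + 1) * ‖x₁ - x₂‖ ^ α +
            4 * 4 ^ |a| * (K + 1) * |y₁ - y₂| ^ α := by
        gcongr <;> nlinarith
      _ = _ := (mul_add _ _ _).symm
end
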